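/- Let F : D^{n+1} → D be holomorphic such that for no automorphism φ of D does F(z,w) = φ(w) identically. If F(z₁,w₁) = w₁ and F(z₁,w₂) = w₂ with w₁ ≠ w₂ for the same z₁ ∈ Dⁿ, then a contradiction follows; equivalently, for such F, each z ∈ Dⁿ admits at most one w ∈ D with F(z,w) = w. -/

import Mathlib

/-!
A holomorphic self-map of the disk with two fixed points is the identity: a Möbius map moves one
fixed point to `0`, and the equality case of the Schwarz lemma applies. So `F (z, ·) = id`.
This propagates to every slice: by Schwarz–Pick, `β ζ := ∂_w F (ζ, 0)` satisfies
`‖β ζ‖ ≤ 1 - ‖F (ζ, 0)‖ ^ 2`; it is holomorphic along complex lines and `β z = 1`, so by the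
maximum modulus principle `β ≡ 1`, which forces `F (ζ, 0) = 0` and then `F (ζ, ·) = id`.
Thus `F (ζ, w) = w` everywhere, and the identity is an automorphism of the disk.
-/

open Metric Set

/-- The open unit polydisk in `ℂⁿ`. -/
def polyDisk (n : ℕ) : Set (Fin n → ℂ) := {z | ∀ i, ‖z i‖ < 1}

/-- `φ` is a holomorphic automorphism of the unit disk. -/
def IsDiskAut (φ : ℂ → ℂ) : Prop :=
  DifferentiableOn ℂ φ (ball (0 : ℂ) 1) ∧
  MapsTo φ (ball (0 : ℂ) 1) (ball (0 : ℂ) 1) ∧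
  ∃ ψ : ℂ → ℂ, DifferentiableOn ℂ ψ (ball (0 : ℂ) 1) ∧
    MapsTo ψ (ball (0 : ℂ) 1) (ball (0 : ℂ) 1) ∧
    (∀ w ∈ ball (0 : ℂ) 1, ψ (φ w) = w) ∧
    (∀ w ∈ ball (0 : ℂ) 1, φ (ψ w) = w)

open Complex Filter Function
open scoped Topology ComplexConjugate

noncomputable def mobius (a z : ℂ) : ℂ := (z - a) / (1 - conj a * z)

section Mobius

variable {a z : ℂ}

lemma one_sub_conj_mul_ne_zero (ha : ‖a‖ < 1) (hz : ‖z‖ < 1) : 1 - conj a * z ≠ 0 := by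
  refine sub_ne_zero.2 (ne_of_apply_ne norm (ne_of_gt ?_))
  rw [norm_one, norm_mul, RCLike.norm_conj]
  nlinarith [norm_nonneg a, norm_nonneg z]

lemma normSq_one_sub_conj_mul_sub_normSq_sub (a z : ℂ) :
    normSq (1 - conj a * z) - normSq (z - a) = (1 - normSq a) * (1 - normSq z) := by
  simp only [normSq_apply, sub_re, sub_im, mul_re, mul_im, conj_re, conj_im, one_re, one_im]
  ring

lemma norm_mobius_lt_one (ha : ‖a‖ < 1) (hz : ‖z‖ < 1) : ‖mobius a z‖ < 1 := by
  have hden := normSq_pos.2 (one_sub_conj_mul_ne_zero ha hz)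
  have hnum : normSq (z - a) < normSq (1 - conj a * z) := by
    have h := normSq_one_sub_conj_mul_sub_normSq_sub a z
    have ha' : normSq a < 1 := by rw [← Complex.sq_norm]; nlinarith [norm_nonneg a]
    have hz' : normSq z < 1 := by rw [← Complex.sq_norm]; nlinarith [norm_nonneg z]
    nlinarith
  rw [← sq_lt_one_iff₀ (norm_nonneg _), Complex.sq_norm, mobius, normSq_div, div_lt_one hden]
  exact hnum

lemma mapsTo_mobius (ha : ‖a‖ < 1) : MapsTo (mobius a) (ball 0 1) (ball 0 1) := fun _ hz =>
  mem_ball_zero_iff.2 (norm_mobius_lt_one ha (mem_ball_zero_iff.1 hz))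

@[simp] lemma mobius_self (a : ℂ) : mobius a a = 0 := by simp [mobius]

@[simp] lemma mobius_zero (a : ℂ) : mobius a 0 = -a := by simp [mobius]

lemma mobius_neg_mobius (ha : ‖a‖ < 1) (hz : ‖z‖ < 1) : mobius (-a) (mobius a z) = z := by
  have hden := one_sub_conj_mul_ne_zero ha hz
  have haa := one_sub_conj_mul_ne_zero ha ha
  have hnum : mobius a z + a = z * (1 - conj a * a) / (1 - conj a * z) := by
    rw [mobius, div_add' _ _ _ hden, div_left_inj' hden]; ring
  have hden' : 1 + conj a * mobius a z = (1 - conj a * a) / (1 - conj a * z) := by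
    rw [mobius, mul_div_assoc', add_div' _ _ _ hden, div_left_inj' hden]; ring
  rw [mobius, map_neg, sub_neg_eq_add, neg_mul, sub_neg_eq_add, hnum, hden',
    div_div_div_cancel_right₀ hden, mul_div_cancel_right₀ _ haa]

lemma mobius_eq_zero_iff (ha : ‖a‖ < 1) (hz : ‖z‖ < 1) : mobius a z = 0 ↔ z = a := by
  rw [mobius, div_eq_zero_iff, sub_eq_zero, or_iff_left (one_sub_conj_mul_ne_zero ha hz)]

lemma differentiableOn_mobius (ha : ‖a‖ < 1) : DifferentiableOn ℂ (mobius a) (ball 0 1) :=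
  fun z hz => DifferentiableAt.differentiableWithinAt <| by
    unfold mobius
    exact (differentiableAt_id.sub_const a).div (by fun_prop)
      (one_sub_conj_mul_ne_zero ha (mem_ball_zero_iff.1 hz))

lemma hasDerivAt_mobius_self (ha : ‖a‖ < 1) :
    HasDerivAt (mobius a) (((1 - ‖a‖ ^ 2 : ℝ) : ℂ)⁻¹) a := by
  have hden := one_sub_conj_mul_ne_zero ha ha
  have h := ((hasDerivAt_id a).sub_const a).div
    (((hasDerivAt_id a).const_mul (conj a)).const_sub 1) hden
  have hnorm : conj a * a = ((‖a‖ ^ 2 : ℝ) : ℂ) := by rw [conj_mul']; push_cast; rfl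
  refine h.congr_deriv ?_
  simp only [id, one_mul, mul_one, sub_self, zero_mul, sub_zero, hnorm] at hden ⊢
  push_cast at hden ⊢
  field_simp

end Mobius

section Schwarz

variable {f : ℂ → ℂ}

lemma norm_deriv_le_one_sub_sq_of_mapsTo_ball (hd : DifferentiableOn ℂ f (ball 0 1))
    (hf : MapsTo f (ball 0 1) (ball 0 1)) : ‖deriv f 0‖ ≤ 1 - ‖f 0‖ ^ 2 := by
  have h0 : (0 : ℂ) ∈ ball (0 : ℂ) 1 := mem_ball_self one_pos
  have ha : ‖f 0‖ < 1 := mem_ball_zero_iff.1 (hf h0)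
  have hpos : 0 < 1 - ‖f 0‖ ^ 2 := by nlinarith [norm_nonneg (f 0)]
  set g := mobius (f 0) ∘ f
  have hgd : DifferentiableOn ℂ g (ball 0 1) :=
    (differentiableOn_mobius ha).comp hd hf
  have hg : MapsTo g (ball 0 1) (closedBall (g 0) 1) := by
    simpa [g] using ((mapsTo_mobius ha).comp hf).mono_right ball_subset_closedBall
  have hderiv : deriv g 0 = ((1 - ‖f 0‖ ^ 2 : ℝ) : ℂ)⁻¹ * deriv f 0 :=
    ((hasDerivAt_mobius_self ha).comp 0
      (hd.differentiableAt (ball_mem_nhds 0 one_pos)).hasDerivAt).deriv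
  have hle := norm_deriv_le_one_of_mapsTo_ball hgd hg one_pos
  rw [hderiv, norm_mul, norm_inv, Complex.norm_real, Real.norm_of_nonneg hpos.le,
    inv_mul_le_iff₀ hpos, mul_one] at hle
  exact hle

lemma eqOn_id_of_mapsTo_ball_of_dslope_eq_one (hd : DifferentiableOn ℂ f (ball 0 1))
    (hf : MapsTo f (ball 0 1) (ball 0 1)) (h0 : f 0 = 0) {c : ℂ} (hc : c ∈ ball (0 : ℂ) 1)
    (hslope : dslope f 0 c = 1) : EqOn f id (ball 0 1) := by
  have hmaps : MapsTo f (ball 0 1) (closedBall (f 0) 1) := by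
    simpa [h0] using hf.mono_right ball_subset_closedBall
  intro w hw
  simpa [h0, hslope] using
    affine_of_mapsTo_ball_of_norm_dslope_eq_div hd hmaps hc (by simp [hslope]) hw

theorem eqOn_id_of_mapsTo_ball_of_fixed {a b : ℂ} (hd : DifferentiableOn ℂ f (ball 0 1))
    (hf : MapsTo f (ball 0 1) (ball 0 1)) (ha : a ∈ ball (0 : ℂ) 1) (hb : b ∈ ball (0 : ℂ) 1)
    (hab : a ≠ b) (hfa : f a = a) (hfb : f b = b) : EqOn f id (ball 0 1) := by
  rw [mem_ball_zero_iff] at ha hb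
  have ha' : ‖-a‖ < 1 := by rwa [norm_neg]
  set g := mobius a ∘ f ∘ mobius (-a)
  have hgd : DifferentiableOn ℂ g (ball 0 1) :=
    (differentiableOn_mobius ha).comp (hd.comp (differentiableOn_mobius ha')
      (mapsTo_mobius ha')) (hf.comp (mapsTo_mobius ha'))
  have hg : MapsTo g (ball 0 1) (ball 0 1) :=
    (mapsTo_mobius ha).comp (hf.comp (mapsTo_mobius ha'))
  have hg0 : g 0 = 0 := by simp [g, hfa]
  set c := mobius a b
  have hc : c ≠ 0 := fun h => hab ((mobius_eq_zero_iff ha hb).1 h).symm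
  have hgc : g c = c := by simp [g, c, mobius_neg_mobius ha hb, hfb]
  have hgid := eqOn_id_of_mapsTo_ball_of_dslope_eq_one hgd hg hg0
    (mem_ball_zero_iff.2 (norm_mobius_lt_one ha hb))
    (by rw [dslope_of_ne _ hc, slope_def_field, hgc, hg0, sub_zero, div_self hc])
  intro w hw
  have hw' := mem_ball_zero_iff.1 hw
  have hfw := mem_ball_zero_iff.1 (hf hw)
  calc f w = mobius (-a) (mobius a (f w)) := (mobius_neg_mobius ha hfw).symm
    _ = mobius (-a) (g (mobius a w)) := by simp [g, mobius_neg_mobius ha hw']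
    _ = w := by rw [hgid (mapsTo_mobius ha hw), id, mobius_neg_mobius ha hw']

end Schwarz

lemma dist_dslope_deriv_le_of_mapsTo_ball {f : ℂ → ℂ} (hd : DifferentiableOn ℂ f (ball 0 1))
    (hf : MapsTo f (ball 0 1) (ball 0 1)) {w : ℂ} (hw : w ∈ ball (0 : ℂ) 1) :
    dist (dslope f 0 w) (deriv f 0) ≤ 4 * ‖w‖ := by
  have h2 : MapsTo f (ball 0 1) (closedBall (f 0) 2) := fun v hv => by
    have h1 := mem_ball_zero_iff.1 (hf hv)
    have h0 := mem_ball_zero_iff.1 (hf (mem_ball_self one_pos))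
    rw [mem_closedBall]
    linarith [dist_le_norm_add_norm (f v) (f 0)]
  have hq2 : ∀ v ∈ ball (0 : ℂ) 1, ‖dslope f 0 v‖ ≤ 2 := fun v hv => by
    simpa using norm_dslope_le_div_of_mapsTo_ball hd h2 hv
  have hq : MapsTo (dslope f 0) (ball 0 1) (closedBall (dslope f 0 0) 4) := fun v hv => by
    rw [mem_closedBall]
    linarith [dist_le_norm_add_norm (dslope f 0 v) (dslope f 0 0), hq2 v hv,
      hq2 0 (mem_ball_self one_pos)]
  have hqd : DifferentiableOn ℂ (dslope f 0) (ball 0 1) :=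
    (differentiableOn_dslope (ball_mem_nhds 0 one_pos)).2 hd
  simpa [dslope_same] using dist_le_div_mul_dist_of_mapsTo_ball hqd hq hw

/-- The derivative at the center is the locally uniform limit of the difference quotients, which
are holomorphic in the parameter. -/
theorem differentiableOn_deriv_zero_of_mapsTo_ball {V : Set ℂ} (hV : IsOpen V) {H : ℂ → ℂ → ℂ}
    (hpar : ∀ w ∈ ball (0 : ℂ) 1, DifferentiableOn ℂ (fun t => H t w) V)
    (hd : ∀ t ∈ V, DifferentiableOn ℂ (H t) (ball 0 1))
    (hmaps : ∀ t ∈ V, MapsTo (H t) (ball 0 1) (ball 0 1)) :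
    DifferentiableOn ℂ (fun t => deriv (H t) 0) V := by
  have hnear : ∀ᶠ w in 𝓝[≠] (0 : ℂ), w ∈ ball (0 : ℂ) 1 ∧ w ≠ 0 :=
    inter_mem (nhdsWithin_le_nhds (ball_mem_nhds 0 one_pos)) self_mem_nhdsWithin
  refine TendstoLocallyUniformlyOn.differentiableOn (φ := 𝓝[≠] (0 : ℂ))
    (F := fun w t => dslope (H t) 0 w) ?_ ?_ hV
  · refine (Metric.tendstoUniformlyOn_iff.2 fun ε hε => ?_).tendstoLocallyUniformlyOn
    have hsmall : ∀ᶠ w in 𝓝 (0 : ℂ), 4 * ‖w‖ < ε := by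
      have : Tendsto (fun w : ℂ => 4 * ‖w‖) (𝓝 0) (𝓝 0) := by
        simpa using (continuous_norm.tendsto (0 : ℂ)).const_mul 4
      exact this.eventually (gt_mem_nhds hε)
    filter_upwards [hnear, nhdsWithin_le_nhds hsmall] with w hw hwε t ht
    rw [dist_comm]
    exact (dist_dslope_deriv_le_of_mapsTo_ball (hd t ht) (hmaps t ht) hw.1).trans_lt hwε
  · filter_upwards [hnear] with w hw
    simp only [dslope_of_ne _ hw.2, slope_def_field, sub_zero]
    exact ((hpar w hw.1).sub (hpar 0 (mem_ball_self one_pos))).div_const w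

section MaxModulus

variable {E F : Type*} [NormedAddCommGroup E] [NormedSpace ℂ E] [NormedAddCommGroup F]
  [NormedSpace ℂ F] [StrictConvexSpace ℝ F]

theorem Convex.eqOn_of_isMaxOn_norm_of_differentiableOn_lines {U : Set E} (hUc : Convex ℝ U)
    (hUo : IsOpen U) {f : E → F} {z : E} (hz : z ∈ U)
    (hf : ∀ y ∈ U, DifferentiableOn ℂ (fun t : ℂ => f (z + t • (y - z)))
      ((fun t : ℂ => z + t • (y - z)) ⁻¹' U))
    (hmax : IsMaxOn (norm ∘ f) U z) : EqOn f (const E (f z)) U := by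
  intro y hy
  set ℓ : ℂ → E := fun t => z + t • (y - z)
  have hℓU : IsOpen (ℓ ⁻¹' U) := hUo.preimage (by fun_prop)
  have hℓc : Convex ℝ (ℓ ⁻¹' U) :=
    (hUc.translate_preimage_right z).linear_preimage
      ((LinearMap.toSpanSingleton ℂ E (y - z)).restrictScalars ℝ)
  have h0 : (0 : ℂ) ∈ ℓ ⁻¹' U := by simpa [ℓ] using hz
  have h1 : (1 : ℂ) ∈ ℓ ⁻¹' U := by simpa [ℓ] using hy
  have hmaxℓ : IsMaxOn (norm ∘ f ∘ ℓ) (ℓ ⁻¹' U) 0 := fun t ht => by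
    simpa [ℓ] using hmax ht
  simpa [ℓ] using
    Complex.eqOn_of_isPreconnected_of_isMaxOn_norm hℓc.isPreconnected hℓU (hf y hy) h0 hmaxℓ h1

end MaxModulus

section Propagation

variable {E : Type*} [NormedAddCommGroup E] [NormedSpace ℂ E] {U : Set E} {G : E × ℂ → ℂ}

lemma DifferentiableOn.comp_const_prodMk {V : Set ℂ} (hG : DifferentiableOn ℂ G (U ×ˢ V)) {ζ : E}
    (hζ : ζ ∈ U) : DifferentiableOn ℂ (fun w => G (ζ, w)) V :=
  hG.comp ((differentiableOn_const ζ).prodMk differentiableOn_id) fun _ hw => mk_mem_prod hζ hw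

theorem Convex.eq_snd_of_eq_snd_on_slice (hUc : Convex ℝ U) (hUo : IsOpen U)
    (hG : DifferentiableOn ℂ G (U ×ˢ ball 0 1)) (hmap : MapsTo G (U ×ˢ ball 0 1) (ball 0 1))
    {z : E} (hz : z ∈ U) (hid : ∀ w ∈ ball (0 : ℂ) 1, G (z, w) = w) :
    ∀ ζ ∈ U, ∀ w ∈ ball (0 : ℂ) 1, G (ζ, w) = w := by
  have hmaps : ∀ ζ ∈ U, MapsTo (fun w => G (ζ, w)) (ball 0 1) (ball 0 1) :=
    fun ζ hζ _ hw => hmap (mk_mem_prod hζ hw)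
  set β : E → ℂ := fun ζ => deriv (fun w => G (ζ, w)) 0
  have hβle : ∀ ζ ∈ U, ‖β ζ‖ ≤ 1 - ‖G (ζ, 0)‖ ^ 2 := fun ζ hζ =>
    norm_deriv_le_one_sub_sq_of_mapsTo_ball (hG.comp_const_prodMk hζ) (hmaps ζ hζ)
  have hβz : β z = 1 := by
    have hloc : (fun w => G (z, w)) =ᶠ[𝓝 0] id :=
      eventually_of_mem (ball_mem_nhds 0 one_pos) hid
    simp only [β, hloc.deriv_eq, deriv_id]
  have hβ : ∀ ζ ∈ U, β ζ = 1 := by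
    refine fun ζ hζ => hβz ▸ hUc.eqOn_of_isMaxOn_norm_of_differentiableOn_lines hUo hz
      (fun y _ => ?_) (fun ζ hζ => ?_) hζ
    · refine differentiableOn_deriv_zero_of_mapsTo_ball (hUo.preimage (by fun_prop))
        (fun w hw => hG.comp (by fun_prop) fun t ht => mk_mem_prod ht hw)
        (fun t ht => hG.comp_const_prodMk ht) (fun t ht => hmaps _ ht)
    · simpa [hβz] using (hβle ζ hζ).trans (sub_le_self 1 (sq_nonneg ‖G (ζ, 0)‖))
  intro ζ hζ
  have h0 : G (ζ, 0) = 0 := by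
    have hsq : ‖G (ζ, 0)‖ ^ 2 ≤ 0 := by simpa [hβ ζ hζ] using hβle ζ hζ
    exact norm_eq_zero.1 (pow_eq_zero_iff two_ne_zero |>.1 (hsq.antisymm (sq_nonneg _)))
  exact eqOn_id_of_mapsTo_ball_of_dslope_eq_one (hG.comp_const_prodMk hζ) (hmaps ζ hζ) h0
    (mem_ball_self one_pos) (by rw [dslope_same]; exact hβ ζ hζ)

end Propagation

lemma polyDisk_eq_pi (n : ℕ) : polyDisk n = univ.pi fun _ => ball (0 : ℂ) 1 := by
  ext z
  simp [polyDisk]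

lemma isOpen_polyDisk (n : ℕ) : IsOpen (polyDisk n) :=
  polyDisk_eq_pi n ▸ isOpen_set_pi finite_univ fun _ _ => isOpen_ball

lemma convex_polyDisk (n : ℕ) : Convex ℝ (polyDisk n) :=
  polyDisk_eq_pi n ▸ convex_pi fun _ _ => convex_ball 0 1

lemma isDiskAut_id : IsDiskAut id :=
  ⟨differentiableOn_id, mapsTo_id _, id, differentiableOn_id, mapsTo_id _,
    fun _ _ => rfl, fun _ _ => rfl⟩

/-- If `F` is not an automorphism in the last variable, then each slice has at most one
fixed point. -/
theorem at_most_one_fixed_point_per_slice (n : ℕ)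
    (F : (Fin n → ℂ) × ℂ → ℂ)
    (hF : DifferentiableOn ℂ F (polyDisk n ×ˢ ball (0 : ℂ) 1))
    (hmap : MapsTo F (polyDisk n ×ˢ ball (0 : ℂ) 1) (ball (0 : ℂ) 1))
    (hnotaut : ¬ ∃ φ : ℂ → ℂ, IsDiskAut φ ∧
      ∀ z ∈ polyDisk n, ∀ w ∈ ball (0 : ℂ) 1, F (z, w) = φ w) :
    ∀ z ∈ polyDisk n, ∀ w₁ ∈ ball (0 : ℂ) 1, ∀ w₂ ∈ ball (0 : ℂ) 1,
      F (z, w₁) = w₁ → F (z, w₂) = w₂ → w₁ = w₂ := by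
  intro z hz w₁ hw₁ w₂ hw₂ hfix₁ hfix₂
  by_contra hne
  have hslice : ∀ w ∈ ball (0 : ℂ) 1, F (z, w) = w :=
    eqOn_id_of_mapsTo_ball_of_fixed (hF.comp_const_prodMk hz) (fun _ hw => hmap (mk_mem_prod hz hw))
      hw₁ hw₂ hne hfix₁ hfix₂
  exact hnotaut ⟨id, isDiskAut_id,
    (convex_polyDisk n).eq_snd_of_eq_snd_on_slice (isOpen_polyDisk n) hF hmap hz hslice⟩
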